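/- Let κ < 0, λ > 0 and let n ≥ 1 be an integer. If u is an S⁺ₙ-solution of problem (P) for parameters (κ, λ), then λ > n²π². -/

import Mathlib

open Set Real Filter

noncomputable section

/-- `u` is twice continuously differentiable on `[a,b]`, satisfies
`1 + κ (u')² > 0` and the ODE `-u'' = λ u (1 + κ (u')²)^(3/2)` on `[a,b]`. -/
def SolODE (κ lam : ℝ) (u : ℝ → ℝ) (a b : ℝ) : Prop :=
  (∀ x ∈ Set.Icc a b, DifferentiableAt ℝ u x) ∧
  (∀ x ∈ Set.Icc a b, DifferentiableAt ℝ (deriv u) x) ∧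
  ContinuousOn (deriv (deriv u)) (Set.Icc a b) ∧
  (∀ x ∈ Set.Icc a b, 0 < 1 + κ * (deriv u x) ^ 2) ∧
  (∀ x ∈ Set.Icc a b,
    -(deriv (deriv u) x) = lam * u x * (1 + κ * (deriv u x) ^ 2) ^ ((3 : ℝ) / 2))

/-- `u` is a solution of problem (P) on `[0,1]` with Dirichlet boundary conditions. -/
def SolP (κ lam : ℝ) (u : ℝ → ℝ) : Prop :=
  SolODE κ lam u 0 1 ∧ u 0 = 0 ∧ u 1 = 0

/-- `u` is an `S⁺ₙ`-solution of problem (P): a nontrivial solution with exactly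
`n - 1` zeros in `(0,1)`, all zeros in `[0,1]` simple, and positive near `0`. -/
def SPlus (κ lam : ℝ) (n : ℕ) (u : ℝ → ℝ) : Prop :=
  SolP κ lam u ∧
  (∃ x ∈ Set.Icc (0 : ℝ) 1, u x ≠ 0) ∧
  {x ∈ Set.Ioo (0 : ℝ) 1 | u x = 0}.ncard = n - 1 ∧
  (∀ τ ∈ Set.Icc (0 : ℝ) 1, u τ = 0 → deriv u τ ≠ 0) ∧
  (∃ δ > 0, ∀ x ∈ Set.Ioo (0 : ℝ) δ, 0 < u x)

/-- The constant `B = ∫₀¹ dθ/√(θ⁻⁴ - 1)`. -/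
def Bconst : ℝ := ∫ θ in (0 : ℝ)..1, 1 / Real.sqrt ((θ ^ 4)⁻¹ - 1)

/-- The sup-norm of `u` over `[0,1]`. -/
def supNorm (u : ℝ → ℝ) : ℝ := sSup ((fun x => |u x|) '' Set.Icc (0 : ℝ) 1)

/-- The time map `J(λ, ξ) = √(-κ) ∫₀¹ ξ/√(1 - (1 - λκξ²(1-θ²)/2)⁻²) dθ`. -/
def Jmap (κ lam ξ : ℝ) : ℝ :=
  Real.sqrt (-κ) *
    ∫ θ in (0 : ℝ)..1,
      ξ / Real.sqrt (1 - ((1 - lam * κ / 2 * ξ ^ 2 * (1 - θ ^ 2))⁻¹) ^ 2)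

open Topology

/-!
On a nodal interval `(a, b)` of `u`, `κ < 0` puts the curvature factor `(1 + κ u'²)^(3/2)` in
`(0, 1]`, so `-u'' ≤ λ u` where `u > 0`. Sturm comparison with `sin (√λ (x - a))` then gives
`π < √λ (b - a)`: otherwise `W = √λ u cos (√λ (x - a)) - u' sin (√λ (x - a))` is antitone on
`[a, b]`, vanishes at `a` and is nonnegative at `b`, so `W' = λ u sin (√λ (x - a)) (factor - 1)`
vanishes on `(a, b)`, forcing `u' ≡ 0` there, which is impossible. An `S⁺ₙ`-solution has `n + 1`
zeros in `[0, 1]`, consecutive ones more than `π / √λ` apart, so `n π / √λ < 1`.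
-/

theorem deriv_nonpos_of_pos_left {u : ℝ → ℝ} {a b : ℝ} (hab : a < b)
    (hu : DifferentiableAt ℝ u b) (hub : u b = 0) (hpos : ∀ x ∈ Ioo a b, 0 < u x) :
    deriv u b ≤ 0 := by
  have hslope : Tendsto (slope u b) (𝓝[Ioo a b] b) (𝓝 (deriv u b)) :=
    (hasDerivAt_iff_tendsto_slope.1 hu.hasDerivAt).mono_left
      (nhdsWithin_mono b fun x hx => hx.2.ne)
  have : (𝓝[Ioo a b] b).NeBot := right_nhdsWithin_Ioo_neBot hab
  refine le_of_tendsto hslope ?_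
  filter_upwards [self_mem_nhdsWithin] with x hx
  rw [slope_def_field, hub, sub_zero]
  exact (div_neg_of_pos_of_neg (hpos x hx) (sub_neg.2 hx.2)).le

theorem sturm_comparison {u : ℝ → ℝ} {ω a b : ℝ} (hω : 0 < ω) (hπ : ω * (b - a) ≤ π)
    (hu : ∀ x ∈ Icc a b, DifferentiableAt ℝ u x)
    (hu' : ∀ x ∈ Icc a b, DifferentiableAt ℝ (deriv u) x)
    (hle : ∀ x ∈ Ioo a b, -deriv (deriv u) x ≤ ω ^ 2 * u x)
    (hua : u a = 0) (hub : u b = 0) (hpos : ∀ x ∈ Ioo a b, 0 < u x) :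
    ∀ x ∈ Ioo a b, -deriv (deriv u) x = ω ^ 2 * u x := by
  intro x hx
  have hab : a < b := hx.1.trans hx.2
  set W : ℝ → ℝ := fun y => u y * (ω * cos (ω * (y - a))) - deriv u y * sin (ω * (y - a))
  have hW : ∀ y ∈ Icc a b,
      HasDerivAt W (-(deriv (deriv u) y + ω ^ 2 * u y) * sin (ω * (y - a))) y := by
    intro y hy
    have hθ : HasDerivAt (fun y : ℝ => ω * (y - a)) ω y := by
      simpa using ((hasDerivAt_id y).sub_const a).const_mul ω
    refine (((hu y hy).hasDerivAt.mul (hθ.cos.const_mul ω)).sub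
      ((hu' y hy).hasDerivAt.mul hθ.sin)).congr_deriv ?_
    ring
  have hsin : ∀ y ∈ Ioo a b, 0 < sin (ω * (y - a)) := fun y hy =>
    sin_pos_of_pos_of_lt_pi (by nlinarith [hy.1]) (by nlinarith [hy.2])
  have hanti : AntitoneOn W (Icc a b) := by
    refine antitoneOn_of_deriv_nonpos (convex_Icc a b)
      (fun y hy => (hW y hy).continuousAt.continuousWithinAt) ?_ ?_ <;> rw [interior_Icc]
    · exact fun y hy => (hW y (Ioo_subset_Icc_self hy)).differentiableAt.differentiableWithinAt
    · intro y hy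
      rw [(hW y (Ioo_subset_Icc_self hy)).deriv]
      nlinarith [hle y hy, hsin y hy]
  have hWa : W a = 0 := by simp [W, hua]
  have hWb : 0 ≤ W b := by
    have hu'b := deriv_nonpos_of_pos_left hab (hu b (right_mem_Icc.2 hab.le)) hub hpos
    have hsinb := sin_nonneg_of_nonneg_of_le_pi (by nlinarith) hπ
    simp only [W, hub]
    nlinarith
  have hW0 : W =ᶠ[𝓝 x] fun _ => 0 := by
    filter_upwards [Ioo_mem_nhds hx.1 hx.2] with y hy
    have hy' := Ioo_subset_Icc_self hy
    exact le_antisymm (hWa ▸ hanti (left_mem_Icc.2 hab.le) hy' hy.1.le)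
      (hWb.trans (hanti hy' (right_mem_Icc.2 hab.le) hy.2.le))
  have hW' : -(deriv (deriv u) x + ω ^ 2 * u x) * sin (ω * (x - a)) = 0 := by
    rw [← (hW x (Ioo_subset_Icc_self hx)).deriv, hW0.deriv_eq, deriv_const]
  have := (mul_eq_zero.1 hW').resolve_right (hsin x hx).ne'
  linarith

theorem IsPreconnected.pos_or_neg_of_ne_zero {X : Type*} [TopologicalSpace X] {s : Set X}
    {u : X → ℝ} (hs : IsPreconnected s) (hu : ContinuousOn u s) (hne : ∀ x ∈ s, u x ≠ 0) :
    (∀ x ∈ s, 0 < u x) ∨ (∀ x ∈ s, u x < 0) := by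
  by_contra! h
  obtain ⟨⟨x, hx, hux⟩, y, hy, huy⟩ := h
  obtain ⟨z, hz, hz0⟩ := hs.intermediate_value hx hy hu ⟨hux, huy⟩
  exact hne z hz hz0

theorem finite_zeros_of_deriv_ne_zero {u : ℝ → ℝ} {a b : ℝ}
    (hu : ∀ x ∈ Icc a b, DifferentiableAt ℝ u x)
    (hsimple : ∀ x ∈ Icc a b, u x = 0 → deriv u x ≠ 0) :
    {x ∈ Icc a b | u x = 0}.Finite := by
  have hclosed : IsClosed (Icc a b ∩ u ⁻¹' {0}) :=
    ContinuousOn.preimage_isClosed_of_isClosed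
      (fun x hx => (hu x hx).continuousAt.continuousWithinAt) isClosed_Icc isClosed_singleton
  refine (isCompact_Icc.of_isClosed_subset hclosed inter_subset_left).finite
    (isDiscrete_iff_nhdsNE.2 fun x hx => inf_principal_eq_bot.2 ?_)
  filter_upwards [((hu x hx.1).hasDerivAt).eventually_ne (hsimple x hx.1 hx.2)] with z hz hzS
  exact hz hzS.2

section SolODE

variable {κ lam a b : ℝ} {u : ℝ → ℝ}

theorem SolODE.mono {c d : ℝ} (hu : SolODE κ lam u a b) (h : Icc c d ⊆ Icc a b) :
    SolODE κ lam u c d :=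
  let ⟨hd1, hd2, hcont, hQ, hODE⟩ := hu
  ⟨fun x hx => hd1 x (h hx), fun x hx => hd2 x (h hx), hcont.mono h, fun x hx => hQ x (h hx),
    fun x hx => hODE x (h hx)⟩

theorem SolODE.neg (hu : SolODE κ lam u a b) : SolODE κ lam (-u) a b := by
  obtain ⟨hd1, hd2, hcont, hQ, hODE⟩ := hu
  simp only [SolODE, deriv.neg', deriv.fun_neg', neg_sq, Pi.neg_apply]
  refine ⟨fun x hx => (hd1 x hx).neg, fun x hx => (hd2 x hx).neg, hcont.neg, hQ,
    fun x hx => ?_⟩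
  linear_combination -(hODE x hx)

theorem SolODE.pi_lt_sqrt_mul_of_pos (hu : SolODE κ lam u a b) (hκ : κ < 0) (hlam : 0 < lam)
    (hab : a < b) (hua : u a = 0) (hub : u b = 0) (hpos : ∀ x ∈ Ioo a b, 0 < u x) :
    π < √lam * (b - a) := by
  obtain ⟨hd1, hd2, -, hQ, hODE⟩ := hu
  by_contra! hπ
  have hsq : √lam ^ 2 = lam := sq_sqrt hlam.le
  have hle : ∀ x ∈ Ioo a b, -deriv (deriv u) x ≤ √lam ^ 2 * u x := by
    intro x hx
    have hx' := Ioo_subset_Icc_self hx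
    have : (1 + κ * deriv u x ^ 2) ^ ((3 : ℝ) / 2) ≤ 1 :=
      rpow_le_one (hQ x hx').le (by nlinarith [sq_nonneg (deriv u x)]) (by norm_num)
    rw [hODE x hx', hsq]
    nlinarith [mul_pos hlam (hpos x hx)]
  have heq := sturm_comparison (sqrt_pos.2 hlam) hπ hd1 hd2 hle hua hub hpos
  -- a point where `u' > 0`, at which the curvature factor is `< 1`
  obtain ⟨c, hc, hc'⟩ := exists_deriv_eq_slope u (show a < (a + b) / 2 by linarith)
    (fun x hx => (hd1 x ⟨hx.1, by linarith [hx.2]⟩).continuousAt.continuousWithinAt)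
    (fun x hx => (hd1 x ⟨hx.1.le, by linarith [hx.2]⟩).differentiableWithinAt)
  have hcab : c ∈ Ioo a b := ⟨hc.1, by linarith [hc.2]⟩
  have hu'c : 0 < deriv u c := by
    rw [hc', hua, sub_zero]
    exact div_pos (hpos _ ⟨by linarith, by linarith⟩) (by linarith)
  have hQc : (1 + κ * deriv u c ^ 2) ^ ((3 : ℝ) / 2) < 1 :=
    rpow_lt_one (hQ c (Ioo_subset_Icc_self hcab)).le (by nlinarith [pow_pos hu'c 2])
      (by norm_num)
  have := heq c hcab
  rw [hODE c (Ioo_subset_Icc_self hcab), hsq] at this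
  nlinarith [mul_pos hlam (hpos c hcab)]

theorem SolODE.pi_lt_sqrt_mul (hu : SolODE κ lam u a b) (hκ : κ < 0) (hlam : 0 < lam)
    (hab : a < b) (hua : u a = 0) (hub : u b = 0) (hne : ∀ x ∈ Ioo a b, u x ≠ 0) :
    π < √lam * (b - a) := by
  have hcont : ContinuousOn u (Ioo a b) := fun x hx =>
    (hu.1 x (Ioo_subset_Icc_self hx)).continuousAt.continuousWithinAt
  rcases isPreconnected_Ioo.pos_or_neg_of_ne_zero hcont hne with hpos | hneg
  · exact hu.pi_lt_sqrt_mul_of_pos hκ hlam hab hua hub hpos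
  · exact hu.neg.pi_lt_sqrt_mul_of_pos hκ hlam hab (by simp [hua]) (by simp [hub])
      fun x hx => neg_pos.2 (hneg x hx)

end SolODE

theorem Finset.card_sub_one_mul_lt_of_gap {s : Finset ℝ} {a b d : ℝ}
    (hs : (s : Set ℝ) ⊆ Set.Icc a b) (hcard : 1 < s.card)
    (hgap : ∀ x ∈ s, ∀ y ∈ s, x < y → (∀ z ∈ s, z ∉ Set.Ioo x y) → d < y - x) :
    ((s.card : ℝ) - 1) * d < b - a := by
  induction s using Finset.induction_on_max generalizing b with
  | empty => simp at hcard
  | insert m t hlt ih =>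
    have hm : m ∉ t := fun h => lt_irrefl m (hlt m h)
    rw [Finset.card_insert_of_notMem hm] at hcard ⊢
    have ht : t.Nonempty := Finset.card_pos.1 (by omega)
    set y := t.max' ht
    have hs' : ((insert m t : Finset ℝ) : Set ℝ) ⊆ Set.Icc a b := hs
    have hmab := hs' (Finset.mem_insert_self m t)
    have hyab := hs' (Finset.mem_insert_of_mem (t.max'_mem ht))
    have hgap_ym : d < m - y := by
      refine hgap y (Finset.mem_insert_of_mem (t.max'_mem ht)) m (Finset.mem_insert_self m t)
        (hlt y (t.max'_mem ht)) fun z hz hzyz => ?_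
      rcases Finset.mem_insert.1 hz with rfl | hz
      · exact lt_irrefl z hzyz.2
      · exact not_le_of_gt hzyz.1 (t.le_max' z hz)
    have hIH : ((t.card : ℝ) - 1) * d ≤ y - a := by
      rcases Nat.lt_or_ge 1 t.card with ht1 | ht1
      · refine (ih (fun x hx => ⟨(hs' (Finset.mem_insert_of_mem hx)).1, t.le_max' x hx⟩) ht1
          fun x hx y' hy' hxy hbetween => hgap x (Finset.mem_insert_of_mem hx) y'
            (Finset.mem_insert_of_mem hy') hxy fun z hz hzxy => ?_).le
        rcases Finset.mem_insert.1 hz with rfl | hz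
        · exact lt_asymm hzxy.2 (hlt y' hy')
        · exact hbetween z hz hzxy
      · have : (t.card : ℝ) = 1 := by exact_mod_cast le_antisymm ht1 (Finset.card_pos.2 ht)
        rw [this, sub_self, zero_mul]
        linarith [hyab.1]
    push_cast
    linarith [hmab.2]

theorem exists_finset_zeros_Icc {u : ℝ → ℝ} {a b : ℝ} (hab : a < b) (hua : u a = 0)
    (hub : u b = 0) (hfin : {x ∈ Ioo a b | u x = 0}.Finite) :
    ∃ s : Finset ℝ, s.card = {x ∈ Ioo a b | u x = 0}.ncard + 2 ∧
      ∀ x, x ∈ s ↔ x ∈ Icc a b ∧ u x = 0 := by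
  refine ⟨insert a (insert b hfin.toFinset), ?_, fun x => ?_⟩
  · rw [Finset.card_insert_of_notMem (by simp [hab.ne]), Finset.card_insert_of_notMem (by simp),
      ← Set.ncard_eq_toFinset_card _ hfin]
  · simp only [Finset.mem_insert, Set.Finite.mem_toFinset, mem_ofPred_eq, mem_Ioo, mem_Icc]
    constructor
    · rintro (rfl | rfl | ⟨⟨hax, hxb⟩, hux⟩)
      exacts [⟨⟨le_rfl, hab.le⟩, hua⟩, ⟨⟨hab.le, le_rfl⟩, hub⟩, ⟨⟨hax.le, hxb.le⟩, hux⟩]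
    · rintro ⟨⟨hax, hxb⟩, hux⟩
      rcases hax.eq_or_lt with rfl | hax
      · exact Or.inl rfl
      rcases hxb.eq_or_lt with rfl | hxb
      · exact Or.inr (Or.inl rfl)
      exact Or.inr (Or.inr ⟨⟨hax, hxb⟩, hux⟩)

theorem stmt10_general (κ lam : ℝ) (hκ : κ < 0) (hlam : 0 < lam) (n : ℕ)
    (u : ℝ → ℝ) (hu : SPlus κ lam n u) :
    (n : ℝ) ^ 2 * Real.pi ^ 2 < lam := by
  obtain ⟨⟨hsol, hu0, hu1⟩, -, hcard, hsimple, -⟩ := hu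
  obtain ⟨s, hcard_s, hmem⟩ := exists_finset_zeros_Icc zero_lt_one hu0 hu1 <|
    (finite_zeros_of_deriv_ne_zero hsol.1 hsimple).subset
      fun x hx => ⟨Ioo_subset_Icc_self hx.1, hx.2⟩
  have hgap : ∀ x ∈ s, ∀ y ∈ s, x < y → (∀ z ∈ s, z ∉ Ioo x y) → π / √lam < y - x := by
    intro x hx y hy hxy hbetween
    obtain ⟨⟨hx0, -⟩, hux⟩ := (hmem x).1 hx
    obtain ⟨⟨-, hy1⟩, huy⟩ := (hmem y).1 hy
    rw [div_lt_iff₀' (sqrt_pos.2 hlam)]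
    exact (hsol.mono (Icc_subset_Icc hx0 hy1)).pi_lt_sqrt_mul hκ hlam hxy hux huy fun z hz huz =>
      hbetween z ((hmem z).2 ⟨⟨hx0.trans hz.1.le, hz.2.le.trans hy1⟩, huz⟩) hz
  have hlt := Finset.card_sub_one_mul_lt_of_gap (fun x hx => ((hmem x).1 hx).1)
    (by omega) hgap
  have hn : (n : ℝ) + 1 ≤ s.card := by exact_mod_cast (by omega : n + 1 ≤ s.card)
  have hnπ : n * (π / √lam) < 1 := by
    nlinarith [div_pos pi_pos (sqrt_pos.2 hlam)]
  rw [← mul_div_assoc, div_lt_one (sqrt_pos.2 hlam), lt_sqrt (by positivity)] at hnπ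
  linarith [mul_pow (n : ℝ) π 2]

theorem stmt10 (κ lam : ℝ) (hκ : κ < 0) (hlam : 0 < lam) (n : ℕ) (hn : 1 ≤ n)
    (u : ℝ → ℝ) (hu : SPlus κ lam n u) :
    (n : ℝ) ^ 2 * Real.pi ^ 2 < lam :=
  stmt10_general κ lam hκ hlam n u hu
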